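/- Let X and Y be independent Weibull random variables with parameters (α_RS, β, γ) and (α_RA, β, γ), with α_RS, α_RA, γ > 0, and suppose the means of X and Y are RS and RA respectively (so RS = α_RS·Γ(1+1/γ) + β and RA = α_RA·Γ(1+1/γ) + β). Then Prob(X > Y) = (RS − β)^γ / ((RS − β)^γ + (RA − β)^γ). -/

import Mathlib

open MeasureTheory Real

/-- The Weibull probability density function with parameters `α` (scale),
`β` (shift) and `γ` (shape). -/
noncomputable def weibullPDF (α β γ : ℝ) (x : ℝ) : ℝ :=
  if β ≤ x then (γ / α) * ((x - β) / α) ^ (γ - 1) * Real.exp (-((x - β) / α) ^ γ) else 0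

/-- The Weibull measure: Lebesgue measure with the Weibull density. -/
noncomputable def weibullMeasure (α β γ : ℝ) : Measure ℝ :=
  volume.withDensity fun x => ENNReal.ofReal (weibullPDF α β γ x)

open Set Filter Topology

/-!
Integrating over `Y` first, `P(X > Y) = E[S_X(Y)]` where `S_X(y) = exp (-((y - β) / α_X) ^ γ)`
is the survival function of `X`. Since `S_X(y) = exp (-c ((y - β) / α_Y) ^ γ)` with
`c = (α_Y / α_X) ^ γ`, the integrand is again a Weibull density up to the factor `1 / (1 + c)`,
so `P(X > Y) = 1 / (1 + c) = α_X ^ γ / (α_X ^ γ + α_Y ^ γ)`. The means enter only through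
`RS - β = α_X Γ(1 + 1/γ)` and `RA - β = α_Y Γ(1 + 1/γ)`, whose common factor cancels.
-/

instance (α β γ : ℝ) : SFinite (weibullMeasure α β γ) := by
  unfold weibullMeasure; infer_instance

section Weibull

variable {α β γ : ℝ}

lemma weibullPDF_of_lt {x : ℝ} (hx : x < β) : weibullPDF α β γ x = 0 :=
  if_neg hx.not_ge

lemma weibullPDF_nonneg (hα : 0 ≤ α) (hγ : 0 ≤ γ) (x : ℝ) : 0 ≤ weibullPDF α β γ x := by
  unfold weibullPDF
  split_ifs with hx
  · have : 0 ≤ (x - β) / α := div_nonneg (sub_nonneg.mpr hx) hα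
    positivity
  · exact le_rfl

lemma measurable_weibullPDF : Measurable (weibullPDF α β γ) := by
  unfold weibullPDF
  refine Measurable.ite measurableSet_Ici ?_ measurable_const
  fun_prop

lemma hasDerivAt_neg_exp_neg_mul_rpow_div (hα : α ≠ 0) {d : ℝ} (hd : d ≠ 0) {x : ℝ}
    (hx : x ≠ β) :
    HasDerivAt (fun y => -exp (-(d * ((y - β) / α) ^ γ)) / d)
      ((γ / α) * ((x - β) / α) ^ (γ - 1) * exp (-(d * ((x - β) / α) ^ γ))) x := by
  have ht : (x - β) / α ≠ 0 := div_ne_zero (sub_ne_zero.mpr hx) hα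
  have hlin : HasDerivAt (fun y => (y - β) / α) (1 / α) x := by
    simpa using ((hasDerivAt_id x).sub_const β).div_const α
  have hpow := (Real.hasDerivAt_rpow_const (p := γ) (Or.inl ht)).comp x hlin
  refine (((hpow.const_mul d).neg.exp).neg.div_const d).congr_deriv ?_
  simp only [Function.comp_apply, Pi.neg_apply]
  field_simp

lemma continuous_neg_exp_neg_mul_rpow_div (hγ : 0 ≤ γ) (d : ℝ) :
    Continuous (fun y => -exp (-(d * ((y - β) / α) ^ γ)) / d) := by
  have : Continuous (fun y => ((y - β) / α) ^ γ) :=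
    (continuous_id.sub continuous_const |>.div_const α).rpow_const fun _ => Or.inr hγ
  fun_prop

lemma tendsto_neg_exp_neg_mul_rpow_div (hα : 0 < α) (hγ : 0 < γ) {d : ℝ} (hd : 0 < d) :
    Tendsto (fun y => -exp (-(d * ((y - β) / α) ^ γ)) / d) atTop (𝓝 0) := by
  have hlin : Tendsto (fun y : ℝ => (y - β) / α) atTop atTop :=
    (tendsto_atTop_add_const_right atTop (-β) tendsto_id).atTop_div_const hα
  have hexp : Tendsto (fun y => exp (-(d * ((y - β) / α) ^ γ))) atTop (𝓝 0) :=
    tendsto_exp_atBot.comp <| tendsto_neg_atTop_atBot.comp <|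
      ((tendsto_rpow_atTop hγ).comp hlin).const_mul_atTop hd
  simpa using hexp.neg.div_const d

lemma setLIntegral_Ioi_weibullPDF_mul_exp (hα : 0 < α) (hγ : 0 < γ) {c a : ℝ} (hc : -1 < c)
    (ha : β ≤ a) :
    ∫⁻ y in Ioi a, ENNReal.ofReal (weibullPDF α β γ y * exp (-(c * ((y - β) / α) ^ γ))) =
      ENNReal.ofReal (exp (-((1 + c) * ((a - β) / α) ^ γ)) / (1 + c)) := by
  have hd : 0 < 1 + c := by linarith
  set g' : ℝ → ℝ := fun y =>
    (γ / α) * ((y - β) / α) ^ (γ - 1) * exp (-((1 + c) * ((y - β) / α) ^ γ))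
  have hint : ∀ y ∈ Ioi a, weibullPDF α β γ y * exp (-(c * ((y - β) / α) ^ γ)) = g' y := by
    intro y hy
    simp only [weibullPDF, if_pos (ha.trans hy.le), g', mul_assoc, ← exp_add]
    ring_nf
  have hderiv : ∀ y ∈ Ioi a, HasDerivAt (fun y => -exp (-((1 + c) * ((y - β) / α) ^ γ)) / (1 + c))
      (g' y) y := fun y hy =>
    hasDerivAt_neg_exp_neg_mul_rpow_div hα.ne' hd.ne' (ha.trans_lt hy).ne'
  have hnonneg : ∀ y ∈ Ioi a, 0 ≤ g' y := fun y hy => by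
    rw [← hint y hy]
    exact mul_nonneg (weibullPDF_nonneg hα.le hγ.le y) (exp_nonneg _)
  have hcont := (continuous_neg_exp_neg_mul_rpow_div (α := α) (β := β) hγ.le (1 + c)
    |>.continuousWithinAt (s := Ici a) (x := a))
  have hlim := tendsto_neg_exp_neg_mul_rpow_div (β := β) hα hγ hd
  rw [setLIntegral_congr_fun measurableSet_Ioi (fun y hy => congrArg ENNReal.ofReal (hint y hy)),
    ← ofReal_integral_eq_lintegral_ofReal
      (integrableOn_Ioi_deriv_of_nonneg hcont hderiv hnonneg hlim)
      ((ae_restrict_iff' measurableSet_Ioi).mpr (ae_of_all _ hnonneg)),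
    integral_Ioi_of_hasDerivAt_of_nonneg hcont hderiv hnonneg hlim]
  ring_nf

lemma weibullMeasure_Ioi (hα : 0 < α) (hγ : 0 < γ) {a : ℝ} (ha : β ≤ a) :
    weibullMeasure α β γ (Ioi a) = ENNReal.ofReal (exp (-((a - β) / α) ^ γ)) := by
  rw [weibullMeasure, withDensity_apply _ measurableSet_Ioi]
  simpa using setLIntegral_Ioi_weibullPDF_mul_exp (β := β) hα hγ (c := 0) (by norm_num) ha

lemma lintegral_weibullPDF_mul_exp (hα : 0 < α) (hγ : 0 < γ) {c : ℝ} (hc : -1 < c) :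
    ∫⁻ y, ENNReal.ofReal (weibullPDF α β γ y * exp (-(c * ((y - β) / α) ^ γ))) =
      ENNReal.ofReal (1 / (1 + c)) := by
  have hsupp : (fun y => ENNReal.ofReal
      (weibullPDF α β γ y * exp (-(c * ((y - β) / α) ^ γ)))).support ⊆ Ici β := by
    intro y hy
    by_contra hyβ
    simp [weibullPDF_of_lt (not_le.mp hyβ)] at hy
  rw [← setLIntegral_eq_of_support_subset hsupp, setLIntegral_congr Ioi_ae_eq_Ici.symm,
    setLIntegral_Ioi_weibullPDF_mul_exp hα hγ hc le_rfl]
  simp [zero_rpow hγ.ne']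

lemma ofReal_weibullPDF_mul_weibullMeasure_Ioi {α₁ α₂ : ℝ} (h₁ : 0 < α₁) (h₂ : 0 < α₂)
    (hγ : 0 < γ) (y : ℝ) :
    ENNReal.ofReal (weibullPDF α₂ β γ y) * weibullMeasure α₁ β γ (Ioi y) =
      ENNReal.ofReal (weibullPDF α₂ β γ y * exp (-((α₂ / α₁) ^ γ * ((y - β) / α₂) ^ γ))) := by
  rcases lt_or_ge y β with hy | hy
  · simp [weibullPDF_of_lt hy]
  have hscale : ((y - β) / α₁) ^ γ = (α₂ / α₁) ^ γ * ((y - β) / α₂) ^ γ := by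
    rw [← mul_rpow (by positivity) (div_nonneg (sub_nonneg.mpr hy) h₂.le)]
    congr 1
    field_simp
  rw [weibullMeasure_Ioi h₁ hγ hy, hscale,
    ENNReal.ofReal_mul (weibullPDF_nonneg h₂.le hγ.le y)]

theorem weibullMeasure_prod_weibullMeasure_lt {α₁ α₂ : ℝ} (h₁ : 0 < α₁) (h₂ : 0 < α₂)
    (hγ : 0 < γ) :
    (weibullMeasure α₁ β γ).prod (weibullMeasure α₂ β γ) {p : ℝ × ℝ | p.2 < p.1} =
      ENNReal.ofReal (α₁ ^ γ / (α₁ ^ γ + α₂ ^ γ)) := by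
  have hsurv : Measurable fun y => weibullMeasure α₁ β γ (Ioi y) :=
    Antitone.measurable fun _ _ hab => measure_mono (Ioi_subset_Ioi hab)
  have hslice : ∀ y : ℝ, (fun x => (x, y)) ⁻¹' {p : ℝ × ℝ | p.2 < p.1} = Ioi y := fun _ => rfl
  rw [Measure.prod_apply_symm (measurableSet_lt measurable_snd measurable_fst)]
  simp only [hslice]
  rw [weibullMeasure.eq_1 α₂, lintegral_withDensity_eq_lintegral_mul _
      measurable_weibullPDF.ennreal_ofReal hsurv]
  simp only [Pi.mul_apply, ofReal_weibullPDF_mul_weibullMeasure_Ioi h₁ h₂ hγ]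
  rw [lintegral_weibullPDF_mul_exp h₂ hγ (by linarith [rpow_nonneg (div_nonneg h₂.le h₁.le) γ]),
    div_rpow h₂.le h₁.le]
  have : 0 < α₁ ^ γ := rpow_pos_of_pos h₁ γ
  congr 1
  field_simp

end Weibull

/-- **Pythagorean Won-Loss Formula in terms of means.** If `X`, `Y` are
independent Weibulls with parameters `(αRS, β, γ)` and `(αRA, β, γ)` having
means `RS` and `RA`, then `Prob(X > Y) = (RS-β)^γ / ((RS-β)^γ + (RA-β)^γ)`. -/
theorem pythagorean_won_loss_means (αRS αRA β γ RS RA : ℝ)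
    (hRS : 0 < αRS) (hRA : 0 < αRA) (hγ : 0 < γ)
    (hmRS : RS = αRS * Real.Gamma (1 + 1 / γ) + β)
    (hmRA : RA = αRA * Real.Gamma (1 + 1 / γ) + β) :
    ((weibullMeasure αRS β γ).prod (weibullMeasure αRA β γ)) {p : ℝ × ℝ | p.2 < p.1} =
      ENNReal.ofReal ((RS - β) ^ γ / ((RS - β) ^ γ + (RA - β) ^ γ)) := by
  have hG : 0 < Gamma (1 + 1 / γ) := Gamma_pos_of_pos (by positivity)
  have hGγ : 0 < Gamma (1 + 1 / γ) ^ γ := rpow_pos_of_pos hG γ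
  rw [weibullMeasure_prod_weibullMeasure_lt hRS hRA hγ, hmRS, hmRA, add_sub_cancel_right,
    add_sub_cancel_right, mul_rpow hRS.le hG.le, mul_rpow hRA.le hG.le, ← add_mul,
    mul_div_mul_right _ _ hGγ.ne']
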